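/- For integers L ≥ 1, i, j, N: [L choose i]_q [L-i-1 choose j]_q [N-1 choose L-i-1]_q (1 - q^N) = [L choose j]_q [N choose L-i]_q [L-j-1 choose i]_q (1 - q^{L-j}), where [M choose m]_q denotes the extended Gaussian polynomial defined for all integers M. -/

import Mathlib

/- STATEMENT 12: for integers `L ≥ 1`, `i`, `j`, `N`:
`[L choose i][L-i-1 choose j][N-1 choose L-i-1](1 - q^N) = [L choose j][N choose L-i][L-j-1 choose i](1 - q^{L-j})`
with the extended Gaussian polynomial `[M choose i]_q = (q^{M-i+1};q)_i/(q;q)_i` for `i ≥ 0`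
and `0` for `i < 0`, defined for all integers `M`. In `RatFunc ℚ`, `q = RatFunc.X`. -/

open Finset

/-- `(z;q)_m` for `m ≥ 0`. -/
noncomputable def qPoch (z : RatFunc ℚ) (m : ℕ) : RatFunc ℚ :=
  ∏ j ∈ range m, (1 - z * RatFunc.X ^ j)

/-- Extended Gaussian polynomial. -/
noncomputable def gaussE (M i : ℤ) : RatFunc ℚ :=
  if 0 ≤ i then qPoch (RatFunc.X ^ (M - i + 1)) i.toNat / qPoch RatFunc.X i.toNat else 0

/-- shifted product `∏_{s<m} (1 - X^(a+s))`. -/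
noncomputable def P (a : ℤ) (m : ℕ) : RatFunc ℚ :=
  ∏ s ∈ range m, (1 - RatFunc.X ^ (a + s))

lemma X_pow_ne_one {k : ℕ} (hk : k ≠ 0) : (RatFunc.X : RatFunc ℚ) ^ k ≠ 1 := by
  intro h
  have h1 : (Polynomial.X : Polynomial ℚ) ^ k = 1 := by
    apply RatFunc.algebraMap_injective
    simpa [map_pow, RatFunc.algebraMap_X] using h
  have := congrArg Polynomial.natDegree h1
  simp [Polynomial.natDegree_X_pow] at this
  exact hk this

lemma one_sub_X_zpow_ne {k : ℤ} (hk : k ≠ 0) : (1 - (RatFunc.X : RatFunc ℚ) ^ k) ≠ 0 := by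
  rw [sub_ne_zero]
  intro h
  have h2 : (RatFunc.X : RatFunc ℚ) ^ k = 1 := h.symm
  have key : ∀ n : ℕ, n ≠ 0 → (RatFunc.X : RatFunc ℚ) ^ (n : ℤ) ≠ 1 := by
    intro n hn
    rw [zpow_natCast]; exact X_pow_ne_one hn
  rcases lt_or_gt_of_ne hk with hneg | hpos
  · have h3 : (RatFunc.X : RatFunc ℚ) ^ (-k) = 1 := by
      rw [zpow_neg, h2, inv_one]
    have := key (-k).toNat (by omega)
    rw [Int.toNat_of_nonneg (by omega)] at this
    exact this h3
  · have := key k.toNat (by omega)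
    rw [Int.toNat_of_nonneg (by omega)] at this
    exact this h2

lemma qPoch_eq_P (a : ℤ) (m : ℕ) : qPoch (RatFunc.X ^ a) m = P a m := by
  unfold qPoch P
  refine Finset.prod_congr rfl fun s _ => ?_
  rw [← zpow_natCast (RatFunc.X : RatFunc ℚ) s, ← zpow_add₀ RatFunc.X_ne_zero]

lemma gaussE_eq (M i : ℤ) (hi : 0 ≤ i) :
    gaussE M i = P (M - i + 1) i.toNat / P 1 i.toNat := by
  rw [gaussE, if_pos hi, qPoch_eq_P]
  congr 1
  have : (RatFunc.X : RatFunc ℚ) = RatFunc.X ^ (1:ℤ) := (zpow_one _).symm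
  rw [this, qPoch_eq_P]

lemma P_succ (a : ℤ) (m : ℕ) : P a (m + 1) = P a m * (1 - RatFunc.X ^ (a + m)) := by
  unfold P; rw [prod_range_succ]

lemma P_merge (a : ℤ) (m n : ℕ) : P a m * P (a + m) n = P a (m + n) := by
  unfold P
  rw [prod_range_add]
  congr 1
  refine Finset.prod_congr rfl fun s _ => ?_
  congr 1
  push_cast
  ring

lemma P_one_ne (m : ℕ) : P 1 m ≠ 0 := by
  unfold P
  rw [Finset.prod_ne_zero_iff]
  intro s _
  exact one_sub_X_zpow_ne (by omega)

lemma P_zero (a : ℤ) (m : ℕ) (h1 : a ≤ 0) (h2 : 0 < a + m) : P a m = 0 := by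
  unfold P
  apply Finset.prod_eq_zero (i := (-a).toNat) (by simp [mem_range]; omega)
  rw [show a + ((-a).toNat : ℤ) = 0 by omega]
  simp

lemma key (a : ℤ) (m n : ℕ) :
    P a m * (1 - RatFunc.X ^ (a + m)) * P (a + m + 1) n = P a (m + 1 + n) := by
  rw [← P_succ, show a + (m:ℤ) + 1 = a + ((m + 1 : ℕ) : ℤ) by push_cast; ring, P_merge]

lemma aux {K : Type*} [Field K] (A B C D E G a b c t u s : K)
    (ha : a ≠ 0) (hb : b ≠ 0) (hc : c ≠ 0) (hu : u ≠ 0)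
    (k1 : B * u * A = G) (k2 : E * s * D = G) :
    A / a * (B / b) * (C / c) * t = D / b * (C * t / (c * u)) * (E / a) * s := by
  field_simp
  linear_combination (C * t) * (k1 - k2)

theorem gauss_triple_identity (L i j N : ℤ) (hL : 1 ≤ L) :
    gaussE L i * gaussE (L - i - 1) j * gaussE (N - 1) (L - i - 1) * (1 - RatFunc.X ^ N)
      = gaussE L j * gaussE N (L - i) * gaussE (L - j - 1) i * (1 - RatFunc.X ^ (L - j)) := by
  by_cases hi : 0 ≤ i
  · by_cases hj : 0 ≤ j
    · by_cases hm : 0 ≤ L - i - 1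
      · -- main case
        rw [gaussE_eq L i hi, gaussE_eq (L-i-1) j hj, gaussE_eq (N-1) (L-i-1) hm,
          gaussE_eq L j hj, gaussE_eq N (L-i) (by omega), gaussE_eq (L-j-1) i hi]
        have hnat : (L - i).toNat = (L - i - 1).toNat + 1 := by omega
        rw [hnat, P_succ (N - (L-i) + 1) (L-i-1).toNat, P_succ 1 (L-i-1).toNat,
          show N - (L-i) + 1 + ((L-i-1).toNat : ℤ) = N by omega,
          show (1:ℤ) + ((L-i-1).toNat : ℤ) = L - i by omega,
          show N - 1 - (L-i-1) + 1 = N - (L-i) + 1 by ring]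
        have k1 := key (L-i-j) j.toNat i.toNat
        rw [show (L-i-j) + (j.toNat:ℤ) + 1 = L - i + 1 by omega,
          show (L-i-j) + (j.toNat:ℤ) = L - i by omega] at k1
        have k2 := key (L-j-i) i.toNat j.toNat
        rw [show (L-j-i) + (i.toNat:ℤ) + 1 = L - j + 1 by omega,
          show (L-j-i) + (i.toNat:ℤ) = L - j by omega] at k2
        have keq : P (L-j-i) (i.toNat + 1 + j.toNat) = P (L-i-j) (j.toNat + 1 + i.toNat) := by
          rw [show L-j-i = L-i-j by ring]; congr 1; omega
        rw [keq] at k2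
        rw [show (L-i-1) - j + 1 = L - i - j by ring, show (L-j-1) - i + 1 = L - j - i by ring]
        have d1 := P_one_ne i.toNat
        have d2 := P_one_ne j.toNat
        have d3 := P_one_ne (L-i-1).toNat
        have d4 : (1 - RatFunc.X ^ (L - i) : RatFunc ℚ) ≠ 0 := one_sub_X_zpow_ne (by omega)
        exact aux _ _ _ _ _ _ _ _ _ _ _ _ d1 d2 d3 d4 k1 k2
      · -- L - i - 1 < 0
        have h0 : gaussE (N-1) (L-i-1) = 0 := by rw [gaussE, if_neg (by omega)]
        rw [h0]
        by_cases hLi : L - i = 0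
        · rcases lt_trichotomy j L with hjL | hjL | hjL
          · have h1 : gaussE (L-j-1) i = 0 := by
              rw [gaussE_eq _ _ hi, P_zero (L-j-1-i+1) i.toNat (by omega) (by omega), zero_div]
            rw [h1]; ring
          · rw [show L - j = 0 by omega]; simp
          · have h1 : gaussE L j = 0 := by
              rw [gaussE_eq _ _ hj, P_zero (L-j+1) j.toNat (by omega) (by omega), zero_div]
            rw [h1]; ring
        · have h1 : gaussE N (L-i) = 0 := by rw [gaussE, if_neg (by omega)]
          rw [h1]; ring
    · have h1 : gaussE (L-i-1) j = 0 := by rw [gaussE, if_neg hj]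
      have h2 : gaussE L j = 0 := by rw [gaussE, if_neg hj]
      rw [h1, h2]; ring
  · have h1 : gaussE L i = 0 := by rw [gaussE, if_neg hi]
    have h2 : gaussE (L-j-1) i = 0 := by rw [gaussE, if_neg hi]
    rw [h1, h2]; ring
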